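/- arXiv:2007.09503 — 5 statements merged into one kernel-verified Lean document; each statement's English description precedes it below -/
import Mathlib

section
/- Let c, d, k ∈ ℝ with c > 0 and Δ := d² − 4ck < 0, and define f(u) = √(c u² + d u + k) and a(u) = arctan((2c/√(−Δ))(u + d/(2c))). Then (a'(u))² = f''(u)/f(u) for all u ∈ ℝ. -/
/-!
Write `Q u = c u² + d u + k` and `D = 4ck - d² > 0`, so that `4cQ = (2cu + d)² + D`.
Differentiating `f = √Q` twice gives `f'' = (2QQ'' - Q'²) / (4Q√Q) = D / (4Q√Q)`, hence
`f''/f = D / (4Q²)`. On the other side `a' = m / (1 + m²(u + d/(2c))²)` with `m² = 4c²/D`,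
and the same identity turns the denominator into `4cQ/D`, so `a'² = D / (4Q²)` as well.
-/

open Real

theorem hasDerivAt_arctan_mul_add (m b u : ℝ) :
    HasDerivAt (fun u => arctan (m * (u + b))) (m / (1 + (m * (u + b)) ^ 2)) u := by
  refine (((hasDerivAt_id' u).add_const b).const_mul m).arctan.congr_deriv ?_
  ring

namespace Quadratic

variable {c d k : ℝ}

theorem four_mul_mul_eq (u : ℝ) :
    4 * c * (c * u ^ 2 + d * u + k) = (2 * c * u + d) ^ 2 + (4 * c * k - d ^ 2) := by
  ring

theorem pos_of_discrim_neg (hc : 0 < c) (hD : 0 < 4 * c * k - d ^ 2) (u : ℝ) :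
    0 < c * u ^ 2 + d * u + k := by
  refine pos_of_mul_pos_right (a := 4 * c) ?_ (by positivity)
  rw [four_mul_mul_eq]
  positivity

theorem hasDerivAt (u : ℝ) :
    HasDerivAt (fun u => c * u ^ 2 + d * u + k) (2 * c * u + d) u := by
  refine (((hasDerivAt_pow 2 u).const_mul c).fun_add ((hasDerivAt_id' u).const_mul d)).add_const k
    |>.congr_deriv ?_
  push_cast
  ring

theorem deriv_sqrt (hpos : ∀ u, 0 < c * u ^ 2 + d * u + k) :
    deriv (fun u => √(c * u ^ 2 + d * u + k)) =
      fun u => (2 * c * u + d) / (2 * √(c * u ^ 2 + d * u + k)) :=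
  funext fun u => ((hasDerivAt u).sqrt (hpos u).ne').deriv

theorem deriv_deriv_sqrt (hpos : ∀ u, 0 < c * u ^ 2 + d * u + k) (u : ℝ) :
    deriv (deriv fun u => √(c * u ^ 2 + d * u + k)) u =
      (4 * c * k - d ^ 2) / (4 * (c * u ^ 2 + d * u + k) * √(c * u ^ 2 + d * u + k)) := by
  set Q := c * u ^ 2 + d * u + k with hQ
  have hQpos : 0 < Q := hpos u
  have hsqrt : √Q ^ 2 = Q := sq_sqrt hQpos.le
  have hnum : HasDerivAt (fun u => 2 * c * u + d) (2 * c) u := by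
    simpa using ((hasDerivAt_id u).const_mul (2 * c)).add_const d
  have hden := ((hasDerivAt u).sqrt hQpos.ne').const_mul 2
  rw [deriv_sqrt hpos, (hnum.fun_div hden (by positivity)).deriv, ← hQ]
  have hsqrt_pos : 0 < √Q := sqrt_pos.2 hQpos
  field_simp
  linear_combination (16 * c * Q - 4 * (4 * c * k - d ^ 2)) * hsqrt + 16 * c * Q * hQ
    + 4 * Q * four_mul_mul_eq (c := c) (d := d) (k := k) u

theorem deriv_deriv_sqrt_div_sqrt (hpos : ∀ u, 0 < c * u ^ 2 + d * u + k) (u : ℝ) :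
    deriv (deriv fun u => √(c * u ^ 2 + d * u + k)) u / √(c * u ^ 2 + d * u + k) =
      (4 * c * k - d ^ 2) / (4 * (c * u ^ 2 + d * u + k) ^ 2) := by
  rw [deriv_deriv_sqrt hpos, div_div, mul_assoc (4 * (c * u ^ 2 + d * u + k)),
    mul_self_sqrt (hpos u).le]
  ring

theorem one_add_sq_mul_add_div (hc : 0 < c) (hD : 0 < 4 * c * k - d ^ 2) (u : ℝ) :
    1 + (2 * c / √(4 * c * k - d ^ 2) * (u + d / (2 * c))) ^ 2 =
      4 * c * (c * u ^ 2 + d * u + k) / (4 * c * k - d ^ 2) := by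
  rw [mul_pow, div_pow, sq_sqrt hD.le, four_mul_mul_eq]
  generalize 4 * c * k - d ^ 2 = D at hD ⊢
  field_simp
  ring

theorem sq_deriv_arctan (hc : 0 < c) (hD : 0 < 4 * c * k - d ^ 2) (u : ℝ) :
    deriv (fun u => arctan (2 * c / √(4 * c * k - d ^ 2) * (u + d / (2 * c)))) u ^ 2 =
      (4 * c * k - d ^ 2) / (4 * (c * u ^ 2 + d * u + k) ^ 2) := by
  have hQ := pos_of_discrim_neg hc hD u
  rw [(hasDerivAt_arctan_mul_add _ _ u).deriv, one_add_sq_mul_add_div hc hD, div_pow, div_pow,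
    sq_sqrt hD.le]
  field_simp
  ring

end Quadratic

theorem stmt_5 (c d k : ℝ) (hc : 0 < c) (hΔ : d ^ 2 - 4 * c * k < 0)
    (f A : ℝ → ℝ)
    (hf : ∀ u, f u = Real.sqrt (c * u ^ 2 + d * u + k))
    (hA : ∀ u, A u =
      Real.arctan ((2 * c / Real.sqrt (4 * c * k - d ^ 2)) * (u + d / (2 * c)))) :
    ∀ u : ℝ, (deriv A u) ^ 2 = deriv (deriv f) u / f u := by
  intro u
  obtain rfl : f = _ := funext hf
  obtain rfl : A = _ := funext hA
  have hD : 0 < 4 * c * k - d ^ 2 := by linarith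
  rw [Quadratic.sq_deriv_arctan hc hD, Quadratic.deriv_deriv_sqrt_div_sqrt
    (Quadratic.pos_of_discrim_neg hc hD)]
end

section
/- Let c, d, k ∈ ℝ with c > 0 and d² − 4ck < 0, and define f(u) = √(c u² + d u + k) and a(u) = arctan((2c/√(4ck − d²))(u + d/(2c))). Then 2 f'(u) a'(u) + f(u) a''(u) = 0 for all u ∈ ℝ. -/
/-!
With `Q u = c u² + d u + k > 0`, the angle `a` has derivative `a' = √(4ck - d²) / (2 Q)`,
so `f² a' = Q a'` is constant. Differentiating, `f (2 f' a' + f a'') = (f² a')' = 0`, and `f > 0`.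
-/

open Real

lemma quadratic_pos {c d k : ℝ} (hc : 0 < c) (hΔ : d ^ 2 - 4 * c * k < 0) (u : ℝ) :
    0 < c * u ^ 2 + d * u + k := by
  nlinarith [sq_nonneg (2 * c * u + d)]

lemma hasDerivAt_arctan_completed_square {c d k : ℝ} (hc : 0 < c) (hΔ : d ^ 2 - 4 * c * k < 0)
    (u : ℝ) :
    HasDerivAt (fun u => arctan ((2 * c / √(4 * c * k - d ^ 2)) * (u + d / (2 * c))))
      (√(4 * c * k - d ^ 2) / (2 * (c * u ^ 2 + d * u + k))) u := by
  have hs : 0 < 4 * c * k - d ^ 2 := by linarith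
  have hs_sq : √(4 * c * k - d ^ 2) ^ 2 = 4 * c * k - d ^ 2 := sq_sqrt hs.le
  have hlin : HasDerivAt (fun u => (2 * c / √(4 * c * k - d ^ 2)) * (u + d / (2 * c)))
      (2 * c / √(4 * c * k - d ^ 2)) u := by
    simpa using ((hasDerivAt_id u).add_const (d / (2 * c))).const_mul
      (2 * c / √(4 * c * k - d ^ 2))
  have harg : 2 * c / √(4 * c * k - d ^ 2) * (u + d / (2 * c))
      = (2 * c * u + d) / √(4 * c * k - d ^ 2) := by
    field_simp
  have hcompleted : 1 + ((2 * c * u + d) / √(4 * c * k - d ^ 2)) ^ 2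
      = 4 * c * (c * u ^ 2 + d * u + k) / √(4 * c * k - d ^ 2) ^ 2 := by
    rw [div_pow, hs_sq, one_add_div hs.ne']
    ring
  refine hlin.arctan.congr_deriv ?_
  rw [harg, hcompleted]
  field_simp
  norm_num

lemma two_mul_deriv_mul_add_mul_deriv_eq_zero_of_sq_mul_eq {f g : ℝ → ℝ} {C u : ℝ}
    (hf : DifferentiableAt ℝ f u) (hg : DifferentiableAt ℝ g u) (hfu : f u ≠ 0)
    (hC : ∀ x, f x ^ 2 * g x = C) :
    2 * deriv f u * g u + f u * deriv g u = 0 := by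
  have hconst : HasDerivAt (fun x => f x ^ 2 * g x)
      (f u * (2 * deriv f u * g u + f u * deriv g u)) u :=
    ((hf.hasDerivAt.fun_pow 2).fun_mul hg.hasDerivAt).congr_deriv (by push_cast; ring)
  rw [funext hC] at hconst
  exact (mul_eq_zero.mp ((hasDerivAt_const u C).unique hconst).symm).resolve_left hfu

theorem stmt_6 (c d k : ℝ) (hc : 0 < c) (hΔ : d ^ 2 - 4 * c * k < 0)
    (f A : ℝ → ℝ)
    (hf : ∀ u, f u = Real.sqrt (c * u ^ 2 + d * u + k))
    (hA : ∀ u, A u =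
      Real.arctan ((2 * c / Real.sqrt (4 * c * k - d ^ 2)) * (u + d / (2 * c)))) :
    ∀ u : ℝ, 2 * deriv f u * deriv A u + f u * deriv (deriv A) u = 0 := by
  intro u
  have hQ := quadratic_pos hc hΔ
  have hA' : deriv A = fun u => √(4 * c * k - d ^ 2) / (2 * (c * u ^ 2 + d * u + k)) :=
    funext fun u => funext hA ▸ (hasDerivAt_arctan_completed_square hc hΔ u).deriv
  refine two_mul_deriv_mul_add_mul_deriv_eq_zero_of_sq_mul_eq (C := √(4 * c * k - d ^ 2) / 2)
    ?_ ?_ ?_ fun x => ?_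
  · rw [funext hf]
    exact (by fun_prop : DifferentiableAt ℝ (fun u => c * u ^ 2 + d * u + k) u).sqrt (hQ u).ne'
  · have := hQ u
    rw [hA']
    fun_prop (disch := positivity)
  · rw [hf]
    exact (sqrt_pos.mpr (hQ u)).ne'
  · rw [hf, hA', sq_sqrt (hQ x).le, ← mul_div_assoc, mul_comm 2,
      mul_div_mul_left _ _ (hQ x).ne']
end

section
/- Let c, d, k ∈ ℝ with c > 0 and d² − 4ck < 0, and define f(u) = √(c u² + d u + k) and a(u) = arctan((2c/√(4ck − d²))(u + d/(2c))). Then f'(u) cos(a(u)) − f(u) a'(u) sin(a(u)) = 0 for all u ∈ ℝ. -/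
open Real Set

theorem stmt_7 (c d k : ℝ) (hc : 0 < c) (hΔ : d ^ 2 - 4 * c * k < 0)
    (f A : ℝ → ℝ)
    (hf : ∀ u, f u = Real.sqrt (c * u ^ 2 + d * u + k))
    (hA : ∀ u, A u =
      Real.arctan ((2 * c / Real.sqrt (4 * c * k - d ^ 2)) * (u + d / (2 * c)))) :
    ∀ u : ℝ,
      deriv f u * Real.cos (A u) - f u * deriv A u * Real.sin (A u) = 0 := by
  intro u
  have hD : 0 < 4 * c * k - d ^ 2 := by linarith
  set D := 4 * c * k - d ^ 2 with hDdef
  have hDne : D ≠ 0 := hD.ne'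
  have hcne : c ≠ 0 := hc.ne'
  have hsD : 0 < Real.sqrt D := Real.sqrt_pos.mpr hD
  have hsD2 : Real.sqrt D ^ 2 = D := Real.sq_sqrt hD.le
  set Q : ℝ := c * u ^ 2 + d * u + k with hQdef
  have hQ : 0 < Q := by nlinarith [sq_nonneg (2 * c * u + d)]
  set m : ℝ := 2 * c / Real.sqrt D with hm
  set x : ℝ := m * (u + d / (2 * c)) with hx
  -- derivative of f
  have hQderiv : HasDerivAt (fun u : ℝ => c * u ^ 2 + d * u + k)
      (2 * c * u + d) u := by
    have h := (((hasDerivAt_pow 2 u).const_mul c).add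
        ((hasDerivAt_id u).const_mul d)).add_const k
    have heq : (c * ((2 : ℕ) * u ^ (2 - 1)) + d * 1 : ℝ) = 2 * c * u + d := by
      push_cast; ring
    rw [heq] at h
    exact h
  have hfd : HasDerivAt f ((2 * c * u + d) / (2 * Real.sqrt Q)) u := by
    have := hQderiv.sqrt hQ.ne'
    exact (this.congr_of_eventuallyEq (by filter_upwards with v; rw [hf v]))
  have hAd : HasDerivAt A (m / (1 + x ^ 2)) u := by
    have hinner : HasDerivAt (fun u : ℝ => m * (u + d / (2 * c))) m u := by
      simpa using ((hasDerivAt_id u).add_const (d / (2 * c))).const_mul m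
    have := hinner.arctan
    have h2 : HasDerivAt (fun u : ℝ =>
        Real.arctan (m * (u + d / (2 * c)))) (m / (1 + x ^ 2)) u := by
      simpa [hx, div_eq_mul_inv, mul_comm, sq] using this
    exact h2.congr_of_eventuallyEq (by filter_upwards with v; rw [hA v])
  rw [hfd.deriv, hAd.deriv, hf u, hA u]
  rw [show (2 * c / Real.sqrt D) * (u + d / (2 * c)) = x from rfl]
  rw [Real.cos_arctan, Real.sin_arctan]
  clear_value x m Q D
  -- key algebraic facts
  have hx2 : x ^ 2 = 4 * c ^ 2 * (u + d / (2 * c)) ^ 2 / D := by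
    rw [hx, hm, mul_pow, div_pow, hsD2]; ring
  have hD' : (0:ℝ) < 4 * c * k - d ^ 2 := by rw [← hDdef]; exact hD
  have hkey : 1 + x ^ 2 = 4 * c * Q / D := by
    rw [hx2, hQdef, hDdef]
    field_simp [hD'.ne']
    ring
  have hmx : m * x = 2 * c * (2 * c * u + d) / D := by
    have h1 : m * x = (2 * c) ^ 2 / Real.sqrt D ^ 2 * (u + d / (2 * c)) := by
      rw [hx, hm]; ring
    rw [h1, hsD2]
    field_simp
  rw [show c * u ^ 2 + d * u + k = Q from hQdef.symm]
  set s := Real.sqrt Q with hs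
  set t := Real.sqrt (1 + x ^ 2) with ht
  have hspos : 0 < s := Real.sqrt_pos.mpr hQ
  have hs2 : s ^ 2 = Q := Real.sq_sqrt hQ.le
  have htpos : 0 < t := Real.sqrt_pos.mpr (by positivity)
  clear_value s t
  have h1x : (1:ℝ) + x ^ 2 ≠ 0 := by positivity
  have e1 : s * (m / (1 + x ^ 2)) * (x / t) = s * (m * x) / ((1 + x ^ 2) * t) := by
    field_simp
  rw [e1, hmx, hkey, ← hs2]
  field_simp
  ring
end

section
/- Let c, d, k ∈ ℝ with c > 0 and d² − 4ck < 0, define f(u) = √(c u² + d u + k) and a(u) = arctan((2c/√(4ck − d²))(u + d/(2c))). Then the function F(u) = f'(u) sin(a(u)) + f(u) a'(u) cos(a(u)) has derivative zero, i.e., F is constant on ℝ. -/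
open Real Set

/-!
Writing `x = 2cu + d` and `p = 4ck - d²`, completing the square gives `4c·q(u) = x² + p` for
`q(u) = cu² + du + k`, and `√(x² + p) · sin (arctan (x / √p)) = x`. Hence `f · sin ∘ a` is the
affine function `u ↦ (2cu + d) / (2√c)`, and `F` is its derivative by the product rule, so `F ≡ √c`.
-/

lemma sqrt_sq_add_mul_sin_arctan_div_sqrt {p : ℝ} (hp : 0 < p) (x : ℝ) :
    √(x ^ 2 + p) * sin (arctan (x / √p)) = x := by
  have hsp : 0 < √p := sqrt_pos.2 hp
  have hone : 1 + (x / √p) ^ 2 = (x ^ 2 + p) / p := by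
    rw [div_pow, sq_sqrt hp.le]; field_simp; ring
  have hq : 0 < √(x ^ 2 + p) := sqrt_pos.2 (by positivity)
  rw [sin_arctan, hone, sqrt_div' _ hp.le]
  field_simp

lemma sqrt_quadratic_mul_sin_arctan {c d k : ℝ} (hc : 0 < c) (hΔ : d ^ 2 - 4 * c * k < 0)
    (u : ℝ) :
    √(c * u ^ 2 + d * u + k) *
        sin (arctan ((2 * c / √(4 * c * k - d ^ 2)) * (u + d / (2 * c)))) =
      (2 * c * u + d) / (2 * √c) := by
  have hp : 0 < 4 * c * k - d ^ 2 := by linarith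
  have hsc : 0 < √c := sqrt_pos.2 hc
  have hsquare :
      (2 * c * u + d) ^ 2 + (4 * c * k - d ^ 2) = (2 * √c) ^ 2 * (c * u ^ 2 + d * u + k) := by
    rw [mul_pow, sq_sqrt hc.le]; ring
  have harg : (2 * c / √(4 * c * k - d ^ 2)) * (u + d / (2 * c)) =
      (2 * c * u + d) / √(4 * c * k - d ^ 2) := by
    field_simp
  have := sqrt_sq_add_mul_sin_arctan_div_sqrt hp (2 * c * u + d)
  rw [hsquare, sqrt_mul (by positivity), sqrt_sq (by positivity), ← harg] at this
  rw [eq_div_iff (by positivity), ← this]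
  ring

lemma deriv_mul_sin_comp {f A : ℝ → ℝ} {u : ℝ} (hf : DifferentiableAt ℝ f u)
    (hA : DifferentiableAt ℝ A u) :
    deriv (fun u => f u * sin (A u)) u = deriv f u * sin (A u) + f u * deriv A u * cos (A u) := by
  have h : HasDerivAt (fun u => f u * sin (A u))
      (deriv f u * sin (A u) + f u * (cos (A u) * deriv A u)) u :=
    hf.hasDerivAt.mul hA.hasDerivAt.sin
  rw [h.deriv]
  ring

theorem stmt_9 (c d k : ℝ) (hc : 0 < c) (hΔ : d ^ 2 - 4 * c * k < 0)
    (f A F : ℝ → ℝ)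
    (hf : ∀ u, f u = Real.sqrt (c * u ^ 2 + d * u + k))
    (hA : ∀ u, A u =
      Real.arctan ((2 * c / Real.sqrt (4 * c * k - d ^ 2)) * (u + d / (2 * c))))
    (hF : ∀ u, F u =
      deriv f u * Real.sin (A u) + f u * deriv A u * Real.cos (A u)) :
    (∀ u : ℝ, deriv F u = 0) ∧ ∀ u v : ℝ, F u = F v := by
  have hfd : Differentiable ℝ f := fun u => by
    rw [show f = _ from funext hf]
    have hq : 0 < c * u ^ 2 + d * u + k := by nlinarith [sq_nonneg (2 * c * u + d)]
    exact (by fun_prop : DifferentiableAt ℝ (fun u => c * u ^ 2 + d * u + k) u).sqrt hq.ne'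
  have hAd : Differentiable ℝ A := by
    rw [show A = _ from funext hA]
    exact Differentiable.arctan (by fun_prop)
  have hprod : (fun u => f u * sin (A u)) = fun u => (2 * c * u + d) / (2 * √c) :=
    funext fun u => by rw [hf, hA]; exact sqrt_quadratic_mul_sin_arctan hc hΔ u
  have hconst : ∀ u, F u = 2 * c / (2 * √c) := fun u => by
    rw [hF, ← deriv_mul_sin_comp (hfd u) (hAd u), hprod]
    simp
  obtain rfl : F = fun _ => 2 * c / (2 * √c) := funext hconst
  exact ⟨fun u => deriv_const u _, fun _ _ => rfl⟩
end

section
/- Let c, k > 0, d ∈ ℝ with d² < 4ck, c₀ ∈ ℝ, and θ₀ with sin(θ₀) = d/(2√(ck)) and cos(θ₀) = √(4ck − d²)/(2√(ck)). Set b(t) = −√c t + c₀, x(t,u) = u cos(b(t)) + X(t), y(t,u) = −u sin(b(t)) + Y(t), where X'(t) = √k cos(θ₀ − b(t)) and Y'(t) = √k sin(θ₀ − b(t)). Then (∂x/∂t)² + (∂y/∂t)² = c u² + d u + k for all (t,u). -/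
open Real Set

theorem stmt_14 (c d k c₀ θ₀ : ℝ) (hc : 0 < c) (hk : 0 < k)
    (hd : d ^ 2 < 4 * c * k)
    (hθs : Real.sin θ₀ = d / (2 * Real.sqrt (c * k)))
    (hθc : Real.cos θ₀ = Real.sqrt (4 * c * k - d ^ 2) / (2 * Real.sqrt (c * k)))
    (b X Y : ℝ → ℝ) (x y : ℝ → ℝ → ℝ)
    (hb : ∀ t, b t = -Real.sqrt c * t + c₀)
    (hX : ∀ t, HasDerivAt X (Real.sqrt k * Real.cos (θ₀ - b t)) t)
    (hY : ∀ t, HasDerivAt Y (Real.sqrt k * Real.sin (θ₀ - b t)) t)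
    (hx : ∀ t u, x t u = u * Real.cos (b t) + X t)
    (hy : ∀ t u, y t u = -u * Real.sin (b t) + Y t) :
    ∀ t u : ℝ,
      (deriv (fun s => x s u) t) ^ 2 + (deriv (fun s => y s u) t) ^ 2 =
        c * u ^ 2 + d * u + k := by
  intro t u
  have hbfun : b = fun t => -Real.sqrt c * t + c₀ := funext hb
  have hbd : HasDerivAt b (-Real.sqrt c) t := by
    rw [hbfun]
    simpa using ((hasDerivAt_id t).const_mul (-Real.sqrt c)).add_const c₀
  have hxd : HasDerivAt (fun s => x s u)
      (u * Real.sqrt c * Real.sin (b t) + Real.sqrt k * Real.cos (θ₀ - b t)) t := by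
    have h1 : HasDerivAt (fun s => u * Real.cos (b s) + X s)
        (u * (-Real.sin (b t) * (-Real.sqrt c)) + Real.sqrt k * Real.cos (θ₀ - b t)) t :=
      ((hbd.cos).const_mul u).add (hX t)
    have he : (fun s => x s u) = fun s => u * Real.cos (b s) + X s :=
      funext fun s => hx s u
    rw [he]
    convert h1 using 1
    ring
  have hyd : HasDerivAt (fun s => y s u)
      (u * Real.sqrt c * Real.cos (b t) + Real.sqrt k * Real.sin (θ₀ - b t)) t := by
    have h1 : HasDerivAt (fun s => -u * Real.sin (b s) + Y s)
        (-u * (Real.cos (b t) * (-Real.sqrt c)) + Real.sqrt k * Real.sin (θ₀ - b t)) t :=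
      ((hbd.sin).const_mul (-u)).add (hY t)
    have he : (fun s => y s u) = fun s => -u * Real.sin (b s) + Y s :=
      funext fun s => hy s u
    rw [he]
    convert h1 using 1
    ring
  rw [hxd.deriv, hyd.deriv]
  have key : Real.sin (b t) * Real.cos (θ₀ - b t) + Real.cos (b t) * Real.sin (θ₀ - b t)
      = Real.sin θ₀ := by
    rw [← Real.sin_add]; ring_nf
  have hck : (0:ℝ) < Real.sqrt (c * k) := Real.sqrt_pos.2 (by positivity)
  have hmul : Real.sqrt c * Real.sqrt k = Real.sqrt (c * k) :=
    (Real.sqrt_mul hc.le k).symm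
  have hd' : 2 * (Real.sqrt c * Real.sqrt k) * Real.sin θ₀ = d := by
    rw [hmul, hθs]; field_simp
  have hsc : Real.sqrt c ^ 2 = c := Real.sq_sqrt hc.le
  have hsk : Real.sqrt k ^ 2 = k := Real.sq_sqrt hk.le
  have h1 : Real.sin (b t) ^ 2 + Real.cos (b t) ^ 2 = 1 := Real.sin_sq_add_cos_sq _
  have h2 : Real.sin (θ₀ - b t) ^ 2 + Real.cos (θ₀ - b t) ^ 2 = 1 :=
    Real.sin_sq_add_cos_sq _
  linear_combination (u ^ 2 * Real.sqrt c ^ 2) * h1 + (Real.sqrt k ^ 2) * h2 +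
    u ^ 2 * hsc + hsk + (2 * u * Real.sqrt c * Real.sqrt k) * key + u * hd'
end
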